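/- Fix n ∈ ℕ and arbitrary functions k, r : (Fin n → Bool) → ℕ. Then every exponent d of A occurring with nonzero coefficient in ⟨n,k,r⟩ satisfies d ≡ n (mod 2). Consequently, for every integer w with w ≡ n (mod 2), every exponent of A occurring with nonzero coefficient in (−A)^{−3w}·⟨n,k,r⟩ is even; that is, (−A)^{−3w}·⟨n,k,r⟩ lies in the subring ℤ[A^2, A^{−2}, z] of (ℤ[z])[A,A^{−1}]. -/

import Mathlib

open Finset

noncomputable section

/-- The ring `(ℤ[z])[A, A⁻¹]`: Laurent polynomials in `A` over `ℤ[z]`. -/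
abbrev LP := LaurentPolynomial (Polynomial ℤ)

/-- The homological variable `z`. -/
def zz : LP := LaurentPolynomial.C Polynomial.X

/-- `a(S)`: the number of `A`-smoothings (coordinates where `S` is `false`). -/
def aCount {n : ℕ} (S : Fin n → Bool) : ℕ := (Finset.univ.filter fun i => S i = false).card

/-- `b(S)`: the number of `B`-smoothings (coordinates where `S` is `true`). -/
def bCount {n : ℕ} (S : Fin n → Bool) : ℕ := (Finset.univ.filter fun i => S i = true).card

/-- Two states are adjacent if they differ in exactly one coordinate. -/
def Adjacent {n : ℕ} (S S' : Fin n → Bool) : Prop :=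
  ∃ i : Fin n, S' = Function.update S i (!(S i))

/-- The bracket state sum
`⟨n,k,r⟩ = Σ_S A^(a(S)-b(S)) · (-A⁻² - A²)^(k S) · z^(r S)` in `(ℤ[z])[A,A⁻¹]`,
where `A^m = LaurentPolynomial.T m`. -/
def bracket (n : ℕ) (k r : (Fin n → Bool) → ℕ) : LP :=
  ∑ S : Fin n → Bool,
    LaurentPolynomial.T ((aCount S : ℤ) - (bCount S : ℤ)) *
      (-(LaurentPolynomial.T (-2)) - LaurentPolynomial.T 2) ^ (k S) * zz ^ (r S)

/-- The variable `A = T 1` as a unit of `(ℤ[z])[A,A⁻¹]`. -/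
def uA : LPˣ := (LaurentPolynomial.isUnit_T (R := Polynomial ℤ) 1).unit

/-! Each state contributes `A^(a-b)` times a polynomial in `A^(±2)` and `z`, and
`a - b = n - 2b ≡ n (mod 2)`; so `A^m · ⟨n,k,r⟩ ∈ ℤ[A², A⁻², z]` whenever `m ≡ n (mod 2)`.
That subring lies in the even part of the grading of `(ℤ[z])[A,A⁻¹]` by exponent parity.
Taking `m = -n` gives the parity of the exponents of `⟨n,k,r⟩`, and for `w ≡ n` the
prefactor `(-A)^(-3w) = ±A^(-3w)` has `-3w ≡ n`. -/

open LaurentPolynomial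

abbrev parityGrade (R : Type*) [CommSemiring R] (i : ZMod 2) : Submodule R R[T;T⁻¹] :=
  AddMonoidAlgebra.gradeBy R (Int.castAddHom (ZMod 2)) i

section parityGrade

variable {R : Type*} [CommSemiring R]

theorem T_mem_parityGrade (m : ℤ) : (T m : R[T;T⁻¹]) ∈ parityGrade R m :=
  AddMonoidAlgebra.single_mem_gradeBy _ _ _

theorem C_mem_parityGrade_zero (a : R) : C a ∈ parityGrade R 0 := by
  have := AddMonoidAlgebra.single_mem_gradeBy (R := R) (Int.castAddHom (ZMod 2)) 0 a
  rwa [map_zero] at this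

theorem T_mem_parityGrade_zero {m : ℤ} (hm : Even m) : (T m : R[T;T⁻¹]) ∈ parityGrade R 0 :=
  ZMod.intCast_eq_zero_iff_even.2 hm ▸ T_mem_parityGrade m

end parityGrade

theorem aCount_add_bCount {n : ℕ} (S : Fin n → Bool) : aCount S + bCount S = n := by
  simpa [aCount, bCount] using card_filter_add_card_filter_not (s := univ) (fun i => S i = false)

theorem val_uA : (uA : LP) = T 1 := rfl

theorem val_uA_zpow (j : ℤ) : ((uA ^ j : LPˣ) : LP) = T j := by
  induction j using Int.induction_on with
  | zero => simp [T_zero]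
  | succ i ih => rw [zpow_add_one, Units.val_mul, ih, val_uA, T_add]
  | pred i ih =>
    rw [zpow_sub_one, Units.val_mul, ih, T_sub, Units.inv_eq_of_mul_eq_one_right]
    rw [val_uA, ← T_add, add_neg_cancel, T_zero]

theorem val_neg_uA_zpow (j : ℤ) :
    (((-uA) ^ j : LPˣ) : LP) = T j ∨ (((-uA) ^ j : LPˣ) : LP) = -T j := by
  rcases Int.even_or_odd j with hj | hj
  · exact .inl (by rw [hj.neg_zpow uA, val_uA_zpow])
  · exact .inr (by rw [hj.neg_zpow uA, Units.val_neg, val_uA_zpow])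

def evenSubring : Subring LP := Subring.closure {T 2, T (-2), zz}

theorem T_mem_evenSubring {m : ℤ} (hm : Even m) : (T m : LP) ∈ evenSubring := by
  obtain ⟨c, rfl⟩ := hm
  induction c using Int.induction_on with
  | zero => simp [T_zero, one_mem]
  | succ i ih =>
    rw [show (i : ℤ) + 1 + (i + 1) = i + i + 2 by ring, T_add]
    exact mul_mem ih (Subring.subset_closure (by simp))
  | pred i ih =>
    rw [show -(i : ℤ) - 1 + (-i - 1) = -i + -i + -2 by ring, T_add]
    exact mul_mem ih (Subring.subset_closure (by simp))

theorem evenSubring_le_parityGrade_zero :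
    evenSubring ≤ SetLike.GradeZero.subring (parityGrade (Polynomial ℤ)) := by
  rw [evenSubring, Subring.closure_le]
  rintro x (rfl | rfl | rfl)
  · exact T_mem_parityGrade_zero even_two
  · exact T_mem_parityGrade_zero (by decide)
  · exact C_mem_parityGrade_zero _

theorem T_mul_bracket_mem_evenSubring (n : ℕ) (k r : (Fin n → Bool) → ℕ) {m : ℤ}
    (hm : m ≡ n [ZMOD 2]) : T m * bracket n k r ∈ evenSubring := by
  have hloop : -(T (-2)) - T 2 ∈ evenSubring :=
    sub_mem (neg_mem (T_mem_evenSubring (by decide))) (T_mem_evenSubring even_two)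
  have hz : zz ∈ evenSubring := Subring.subset_closure (by simp)
  rw [bracket, mul_sum]
  refine sum_mem fun S _ => ?_
  have hS : Even (m + (aCount S - bCount S)) := by
    have := aCount_add_bCount S
    have := hm.dvd
    rw [even_iff_two_dvd]
    omega
  rw [show ∀ a b : LP, T m * (T (aCount S - bCount S) * a * b) =
      T (m + (aCount S - bCount S)) * (a * b) from fun a b => by rw [T_add]; ring]
  exact mul_mem (T_mem_evenSubring hS) (mul_mem (pow_mem hloop _) (pow_mem hz _))

/-- Lemma 4.2: every exponent of `A` in `⟨n,k,r⟩` is congruent to `n`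
mod `2`; consequently, for any integer `w ≡ n (mod 2)` all exponents of `A` in
`(-A)^(-3w)·⟨n,k,r⟩` are even, i.e. `(-A)^(-3w)·⟨n,k,r⟩` lies in `ℤ[A², A⁻², z]`. -/
theorem bracket_exponent_parity (n : ℕ) (k r : (Fin n → Bool) → ℕ) :
    (∀ d ∈ (bracket n k r).coeff.support, d ≡ (n : ℤ) [ZMOD 2]) ∧
    (∀ w : ℤ, w ≡ (n : ℤ) [ZMOD 2] →
      (∀ d ∈ ((((-uA) ^ (-3 * w) : LPˣ) : LP) * bracket n k r).coeff.support, Even d) ∧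
      (((-uA) ^ (-3 * w) : LPˣ) : LP) * bracket n k r ∈
        Subring.closure {(LaurentPolynomial.T 2 : LP), LaurentPolynomial.T (-2), zz}) := by
  refine ⟨fun d hd => ?_, fun w hw => ?_⟩
  · have hshift : T (-n) * bracket n k r ∈ parityGrade (Polynomial ℤ) 0 :=
      evenSubring_le_parityGrade_zero
        (T_mul_bracket_mem_evenSubring n k r (by unfold Int.ModEq; omega))
    have hgrade : bracket n k r ∈ parityGrade (Polynomial ℤ) n := by
      simpa [← mul_assoc, ← T_add] using SetLike.mul_mem_graded (T_mem_parityGrade n) hshift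
    exact (ZMod.intCast_eq_intCast_iff _ _ 2).1 (by simpa using hgrade d hd)
  · have hmem : (((-uA) ^ (-3 * w) : LPˣ) : LP) * bracket n k r ∈ evenSubring := by
      have hm := T_mul_bracket_mem_evenSubring n k r (m := -3 * w) (by
        unfold Int.ModEq at hw ⊢; omega)
      rcases val_neg_uA_zpow (-3 * w) with h | h <;> rw [h]
      · exact hm
      · rw [neg_mul (T _ : LP)]
        exact neg_mem hm
    refine ⟨fun d hd => ZMod.intCast_eq_zero_iff_even.1 ?_, hmem⟩
    simpa using evenSubring_le_parityGrade_zero hmem d hd
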